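/- Assume (H1) and (H2), and for ξ > 0 set c_ξ := ψ̂'(ξ)/ξ. Let 0 < ξ₁ ≤ ξ₂ and w₁, w₂ ∈ ℝ satisfy |w₁| ≤ ξ₁, |w₂| ≤ ξ₂ and |w₂| > ξ_c, and suppose that w₂ > w₁ if w₂ > 0, and w₂ < w₁ if w₂ < 0. Then (c_{ξ₂}·w₂ − c_{ξ₁}·w₁)/(w₂ − w₁) ≤ ψ̂'(0)/ξ_c. -/

import Mathlib

/-!
Concavity makes `ψ̂'` antitone, and `ψ̂'` vanishes beyond `ξ_c`, where `ψ̂` is constant. Hence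
`c_{ξ₂} = 0` and `0 ≤ c_{ξ₁} ξ₁ ≤ ψ̂'(0)`, so the stiffness reduces to `-c_{ξ₁} w₁ / (w₂ - w₁)`.
This is nonpositive when `w₁` has the sign of `w₂`; otherwise `|c_{ξ₁} w₁| ≤ ψ̂'(0)` and
`|w₂ - w₁| ≥ |w₂| > ξ_c`.
-/

open Filter Topology Set

theorem ConcaveOn.antitoneOn_of_hasDerivWithinAt {S : Set ℝ} {f f' : ℝ → ℝ}
    (hfc : ConcaveOn ℝ S f) (hf : ∀ x ∈ S, HasDerivWithinAt f (f' x) S x) :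
    AntitoneOn f' S := by
  intro x hx y hy hxy
  rcases hxy.eq_or_lt with rfl | hxy
  · rfl
  exact (hfc.le_slope_of_hasDerivWithinAt hx hy hxy (hf y hy)).trans
    (hfc.slope_le_of_hasDerivWithinAt hx hy hxy (hf x hx))

theorem HasDerivWithinAt.eq_zero_of_eventuallyEq_const {𝕜 F : Type*} [NontriviallyNormedField 𝕜]
    [NormedAddCommGroup F] [NormedSpace 𝕜 F] {f : 𝕜 → F} {f' c : F} {s : Set 𝕜} {x : 𝕜}
    (hf : HasDerivWithinAt f f' s x) (hs : UniqueDiffWithinAt 𝕜 s x)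
    (hc : f =ᶠ[𝓝 x] fun _ ↦ c) : f' = 0 :=
  hs.eq_deriv _ hf ((hasDerivAt_const x c).congr_of_eventuallyEq hc).hasDerivWithinAt

theorem neg_mul_div_sub_le_div_of_lt {a c ξ ξc w₁ w₂ : ℝ} (hc : 0 ≤ c) (hca : c * ξ ≤ a)
    (hw₁ : |w₁| ≤ ξ) (hξc : 0 < ξc) (hw₂ : ξc < w₂) (hw₁₂ : w₁ < w₂) :
    -(c * w₁) / (w₂ - w₁) ≤ a / ξc := by
  have ha : 0 ≤ a := (mul_nonneg hc ((abs_nonneg w₁).trans hw₁)).trans hca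
  have hd : 0 < w₂ - w₁ := sub_pos.mpr hw₁₂
  rcases le_or_gt 0 w₁ with hw₁0 | hw₁0
  · exact (div_nonpos_of_nonpos_of_nonneg (by nlinarith) hd.le).trans (by positivity)
  · calc -(c * w₁) / (w₂ - w₁) ≤ a / (w₂ - w₁) := by
          gcongr
          nlinarith [neg_le_of_abs_le hw₁]
      _ ≤ a / ξc := by gcongr; linarith

theorem neg_mul_div_sub_le_div_of_lt_abs {a c ξ ξc w₁ w₂ : ℝ} (hc : 0 ≤ c) (hca : c * ξ ≤ a)
    (hw₁ : |w₁| ≤ ξ) (hξc : 0 < ξc) (hw₂ : ξc < |w₂|)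
    (hpos : 0 < w₂ → w₁ < w₂) (hneg : w₂ < 0 → w₂ < w₁) :
    -(c * w₁) / (w₂ - w₁) ≤ a / ξc := by
  rcases lt_or_ge w₂ 0 with hw₂neg | hw₂nonneg
  · have hreflected := neg_mul_div_sub_le_div_of_lt (w₁ := -w₁) (w₂ := -w₂) hc hca
      (by rwa [abs_neg]) hξc (by rwa [abs_of_neg hw₂neg] at hw₂) (neg_lt_neg (hneg hw₂neg))
    rwa [neg_sub_neg, mul_neg, neg_neg, ← neg_sub, div_neg, ← neg_div] at hreflected
  · have hw₂pos : 0 < w₂ :=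
      hw₂nonneg.lt_of_ne (by rintro rfl; rw [abs_zero] at hw₂; linarith)
    exact neg_mul_div_sub_le_div_of_lt hc hca hw₁ hξc (by rwa [abs_of_pos hw₂pos] at hw₂)
      (hpos hw₂pos)

theorem incremental_stiffness_bound_beyond_critical_general
    (ξc : ℝ) (hξc : 0 < ξc) (psih psih' : ℝ → ℝ)
    (hconc : ConcaveOn ℝ (Set.Ici 0) psih)
    (hconst : ∀ w ≥ ξc, psih w = psih ξc)
    (hC1 : ∀ w ∈ Set.Ici (0:ℝ), HasDerivWithinAt psih (psih' w) (Set.Ici 0) w)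
    (ξ₁ ξ₂ w₁ w₂ : ℝ) (hξ₁ : 0 < ξ₁) (hξ₁₂ : ξ₁ ≤ ξ₂)
    (hw₁ : |w₁| ≤ ξ₁) (hw₂ : |w₂| ≤ ξ₂) (hw₂c : ξc < |w₂|)
    (hposc : 0 < w₂ → w₁ < w₂) (hnegc : w₂ < 0 → w₂ < w₁) :
    (psih' ξ₂ / ξ₂ * w₂ - psih' ξ₁ / ξ₁ * w₁) / (w₂ - w₁) ≤ psih' 0 / ξc := by
  have hanti : AntitoneOn psih' (Ici 0) := hconc.antitoneOn_of_hasDerivWithinAt hC1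
  have hξ₁₀ : ξ₁ ∈ Ici (0 : ℝ) := hξ₁.le
  have hξ₂₀ : ξ₂ ∈ Ici (0 : ℝ) := hξ₁.le.trans hξ₁₂
  have hzero₂ : psih' ξ₂ = 0 := by
    have hflat : psih =ᶠ[𝓝 ξ₂] fun _ ↦ psih ξc :=
      eventually_of_mem (Ioi_mem_nhds (hw₂c.trans_le hw₂)) fun w hw ↦ hconst w (le_of_lt hw)
    exact (hC1 ξ₂ hξ₂₀).eq_zero_of_eventuallyEq_const (uniqueDiffOn_Ici 0 ξ₂ hξ₂₀) hflat
  have hnonneg₁ : 0 ≤ psih' ξ₁ := hzero₂ ▸ hanti hξ₁₀ hξ₂₀ hξ₁₂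
  have hle₁ : psih' ξ₁ / ξ₁ * ξ₁ ≤ psih' 0 := by
    rw [div_mul_cancel₀ _ hξ₁.ne']
    exact hanti self_mem_Ici hξ₁₀ hξ₁.le
  rw [hzero₂, zero_div, zero_mul, zero_sub]
  exact neg_mul_div_sub_le_div_of_lt_abs (div_nonneg hnonneg₁ hξ₁.le) hle₁ hw₁ hξc hw₂c
    hposc hnegc

/-- beyond the critical opening, the incremental cohesive stiffness
α = (c_{ξ₂}w₂ − c_{ξ₁}w₁)/(w₂ − w₁), c_ξ = ψ̂'(ξ)/ξ, is bounded above by ψ̂'(0)/ξ_c: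
under (H1), (H2), with 0 < ξ₁ ≤ ξ₂, |w₁| ≤ ξ₁, |w₂| ≤ ξ₂, |w₂| > ξ_c, and
w₁ < w₂ if w₂ > 0, w₂ < w₁ if w₂ < 0. -/
theorem incremental_stiffness_bound_beyond_critical
    (ξc : ℝ) (hξc : 0 < ξc) (psih psih' psih'' : ℝ → ℝ)
    (hnn : ∀ w ≥ (0:ℝ), 0 ≤ psih w)
    (hconc : ConcaveOn ℝ (Set.Ici 0) psih)
    (h0 : psih 0 = 0)
    (hpos : ∀ w > (0:ℝ), 0 < psih w)
    (hconst : ∀ w ≥ ξc, psih w = psih ξc)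
    (hC1 : ∀ w ∈ Set.Ici (0:ℝ), HasDerivWithinAt psih (psih' w) (Set.Ici 0) w)
    (hC1c : ContinuousOn psih' (Set.Ici 0))
    (hC2 : ∀ w ∈ Set.Icc (0:ℝ) ξc, HasDerivWithinAt psih' (psih'' w) (Set.Icc 0 ξc) w)
    (hC2c : ContinuousOn psih'' (Set.Icc 0 ξc))
    (ξ₁ ξ₂ w₁ w₂ : ℝ) (hξ₁ : 0 < ξ₁) (hξ₁₂ : ξ₁ ≤ ξ₂)
    (hw₁ : |w₁| ≤ ξ₁) (hw₂ : |w₂| ≤ ξ₂) (hw₂c : ξc < |w₂|)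
    (hposc : 0 < w₂ → w₁ < w₂) (hnegc : w₂ < 0 → w₂ < w₁) :
    (psih' ξ₂ / ξ₂ * w₂ - psih' ξ₁ / ξ₁ * w₁) / (w₂ - w₁) ≤ psih' 0 / ξc :=
  incremental_stiffness_bound_beyond_critical_general ξc hξc psih psih' hconc hconst hC1 ξ₁ ξ₂ w₁ w₂
    hξ₁ hξ₁₂ hw₁ hw₂ hw₂c hposc hnegc
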